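/- arXiv:0712.1006 — 2 statements merged into one kernel-verified Lean document; each statement's English description precedes it below -/
import Mathlib

section
/- Let μ be a finite positive measure on T*ℝ^d = ℝ^d × ℝ^d that is invariant under the translation flow φ_s(x,ξ) = (x + sξ, ξ) for every s ∈ ℝ, and suppose μ({(x,ξ) : ξ = 0}) = 0. Then μ = 0. -/
open MeasureTheory

/-!
A box `{(x, ξ) | ‖x‖ ≤ R, ε ≤ ‖ξ‖}` with `ε > 0` is moved by the flow at time `s` to a set whose
`x`-coordinates are within `R` of `s • ξ`; for times spaced more than `2R / ε` apart these
images are pairwise disjoint. Invariance gives countably many disjoint sets of the same mass,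
so a finite measure gives the box mass zero. Countably many boxes cover `{ξ ≠ 0}`.
-/

theorem measure_eq_zero_of_pairwise_disjoint_of_measure_eq {α : Type*} [MeasurableSpace α]
    {μ : Measure α} [IsFiniteMeasure μ] {C : ℕ → Set α} {t : Set α}
    (hC : ∀ n, MeasurableSet (C n)) (hdisj : Pairwise (Function.onFun Disjoint C))
    (hμC : ∀ n, μ (C n) = μ t) : μ t = 0 := by
  by_contra ht
  have : ∑' _ : ℕ, μ t ≤ μ Set.univ := calc
    ∑' _ : ℕ, μ t = ∑' n, μ (C n) := by simp only [hμC]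
    _ = μ (⋃ n, C n) := (measure_iUnion hdisj hC).symm
    _ ≤ μ Set.univ := measure_mono (Set.subset_univ _)
  rw [ENNReal.tsum_const_eq_top_of_ne_zero ht] at this
  exact measure_ne_top μ Set.univ (top_le_iff.mp this)

section TranslationFlow

variable {E : Type*} [NormedAddCommGroup E]

theorem setOf_snd_ne_zero_subset_iUnion_box :
    {p : E × E | p.2 ≠ 0} ⊆
      ⋃ (n : ℕ) (m : ℕ), {p : E × E | ‖p.1‖ ≤ n ∧ 1 / (m + 1) ≤ ‖p.2‖} := by
  intro p hp
  obtain ⟨n, hn⟩ := exists_nat_ge ‖p.1‖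
  obtain ⟨m, hm⟩ := exists_nat_one_div_lt (norm_pos_iff.mpr hp)
  exact Set.mem_iUnion₂.mpr ⟨n, m, hn, hm.le⟩

variable [NormedSpace ℝ E]

def translationFlow (s : ℝ) (p : E × E) : E × E := (p.1 + s • p.2, p.2)

theorem translationFlow_neg_apply_translationFlow (s : ℝ) (p : E × E) :
    translationFlow (-s) (translationFlow s p) = p := by
  simp [translationFlow]

theorem image_translationFlow (s : ℝ) (A : Set (E × E)) :
    translationFlow s '' A = translationFlow (-s) ⁻¹' A :=
  congrFun (Set.image_eq_preimage_of_inverse (translationFlow_neg_apply_translationFlow s)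
    fun p => by simpa only [neg_neg] using translationFlow_neg_apply_translationFlow (-s) p) A

theorem disjoint_image_translationFlow {R ε s t : ℝ} (hst : 2 * R < |s - t| * ε) :
    Disjoint (translationFlow s '' {p : E × E | ‖p.1‖ ≤ R ∧ ε ≤ ‖p.2‖})
      (translationFlow t '' {p : E × E | ‖p.1‖ ≤ R ∧ ε ≤ ‖p.2‖}) := by
  rw [Set.disjoint_left]
  rintro _ ⟨p, ⟨hp₁, hp₂⟩, rfl⟩ ⟨q, ⟨hq₁, -⟩, hqp⟩
  simp only [translationFlow, Prod.mk.injEq] at hqp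
  obtain ⟨hx, hξ⟩ := hqp
  rw [hξ] at hx
  have hdiff : (s - t) • p.2 = q.1 - p.1 := by
    linear_combination (norm := module) -hx
  refine hst.not_ge ?_
  calc
    |s - t| * ε ≤ ‖(s - t) • p.2‖ := by
      rw [norm_smul, Real.norm_eq_abs]; gcongr
    _ = ‖q.1 - p.1‖ := by rw [hdiff]
    _ ≤ ‖q.1‖ + ‖p.1‖ := norm_sub_le _ _
    _ ≤ 2 * R := by linarith

variable [MeasurableSpace E] [BorelSpace E] [SecondCountableTopology E]

theorem measurable_translationFlow (s : ℝ) : Measurable (translationFlow (E := E) s) := by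
  unfold translationFlow
  fun_prop

theorem measure_box_eq_zero {μ : Measure (E × E)} [IsFiniteMeasure μ]
    (hinv : ∀ s : ℝ, ∀ A : Set (E × E), MeasurableSet A → μ (translationFlow s '' A) = μ A)
    (R : ℝ) {ε : ℝ} (hε : 0 < ε) :
    μ {p : E × E | ‖p.1‖ ≤ R ∧ ε ≤ ‖p.2‖} = 0 := by
  set B := {p : E × E | ‖p.1‖ ≤ R ∧ ε ≤ ‖p.2‖}
  have hB : MeasurableSet B := by
    simp only [B, Set.ofPred_and]
    exact (measurableSet_le (by fun_prop) measurable_const).inter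
      (measurableSet_le measurable_const (by fun_prop))
  set T := 2 * R / ε + 1
  refine measure_eq_zero_of_pairwise_disjoint_of_measure_eq
    (C := fun n : ℕ => translationFlow (n * T) '' B)
    (fun n => image_translationFlow _ B ▸ hB.preimage (measurable_translationFlow _))
    (fun n m hnm => disjoint_image_translationFlow ?_) (fun n => hinv _ B hB)
  have hone : (1 : ℝ) ≤ |(n : ℝ) - m| := by
    have : (1 : ℤ) ≤ |(n : ℤ) - m| := Int.one_le_abs (sub_ne_zero.mpr (by exact_mod_cast hnm))
    exact_mod_cast this
  calc 2 * R < T * ε := by rw [add_mul, div_mul_cancel₀ _ hε.ne']; linarith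
    _ ≤ |T| * ε := by gcongr; exact le_abs_self T
    _ ≤ |(n : ℝ) - m| * |T| * ε := by gcongr; exact le_mul_of_one_le_left (abs_nonneg T) hone
    _ = |n * T - m * T| * ε := by rw [← sub_mul, abs_mul]

end TranslationFlow

/-- A finite positive measure on T*ℝ^d = ℝ^d × ℝ^d invariant under the translation
(geodesic) flow φ_s(x,ξ) = (x + sξ, ξ) and giving no mass to {ξ = 0} must vanish. -/
theorem stmt0 (d : ℕ) (μ : Measure ((Fin d → ℝ) × (Fin d → ℝ)))
    [IsFiniteMeasure μ]
    (hinv : ∀ s : ℝ, ∀ A : Set ((Fin d → ℝ) × (Fin d → ℝ)), MeasurableSet A →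
      μ ((fun p : (Fin d → ℝ) × (Fin d → ℝ) => (p.1 + s • p.2, p.2)) '' A) = μ A)
    (hzero : μ {p : (Fin d → ℝ) × (Fin d → ℝ) | p.2 = 0} = 0) :
    μ = 0 := by
  have hne : μ {p : (Fin d → ℝ) × (Fin d → ℝ) | p.2 ≠ 0} = 0 :=
    measure_mono_null setOf_snd_ne_zero_subset_iUnion_box <|
      measure_iUnion_null fun n => measure_iUnion_null fun m =>
        measure_box_eq_zero hinv n (by positivity)
  rw [← Measure.measure_univ_eq_zero]
  exact measure_mono_null (fun p _ => em (p.2 = 0)) (measure_union_null hzero hne)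
end

section
/- Let μ be a finite positive measure on the cotangent bundle of the flat torus, T^d × ℝ^d, invariant under the geodesic flow φ_s(x,ξ) = (x + sξ mod 2πℤ^d, ξ). If a ∈ C_c(T^d × ℝ^d) and μ gives no mass to T^d × Ω, where Ω = {ξ ∈ ℝ^d : k·ξ = 0 for some nonzero k ∈ ℤ^d}, then ∫ a dμ = ∫ ā dμ where ā(ξ) := (2π)^{-d} ∫_{T^d} a(y,ξ) dy. -/
/-!
Since `μ` is invariant, every time average `t⁻¹ ∫₀ᵗ a(x + sξ, ξ) ds` has the same `μ`-integral
as `a` (Fubini). For nonresonant `ξ`, hence for `μ`-almost every point, these time averages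
converge to the spatial average `ā(ξ)`: for a character `exp (i k·x)` with `k ≠ 0` the time
average is `O(1 / (t |k·ξ|))`, characters span a dense subspace of `C(Tᵈ, ℂ)` by
Stone–Weierstrass, and time averages are `1`-Lipschitz in the sup norm. Dominated convergence
then gives `∫ a dμ = ∫ ā dμ`.
-/

open MeasureTheory Filter Topology Set Submodule

instance : Fact (0 < 2 * Real.pi) := ⟨by positivity⟩

section Average

variable {α E : Type*} [MeasurableSpace α] [NormedAddCommGroup E] [NormedSpace ℝ E]
  {μ : Measure α} {f g : α → E}

theorem MeasureTheory.average_add (hf : Integrable f μ) (hg : Integrable g μ) :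
    ⨍ x, f x + g x ∂μ = ⨍ x, f x ∂μ + ⨍ x, g x ∂μ := by
  simp only [average_eq, integral_add hf hg, smul_add]

theorem MeasureTheory.average_sub (hf : Integrable f μ) (hg : Integrable g μ) :
    ⨍ x, f x - g x ∂μ = ⨍ x, f x ∂μ - ⨍ x, g x ∂μ := by
  simp only [average_eq, integral_sub hf hg, smul_sub]

theorem MeasureTheory.average_const_mul (c : ℂ) (f : α → ℂ) :
    ⨍ x, c * f x ∂μ = c * ⨍ x, f x ∂μ := by
  simp only [average_eq, integral_const_mul, mul_smul_comm]

theorem MeasureTheory.average_ofReal (f : α → ℝ) :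
    ⨍ x, (f x : ℂ) ∂μ = ↑(⨍ x, f x ∂μ) := by
  simp only [average_eq', integral_complex_ofReal]

theorem MeasureTheory.norm_average_le {C : ℝ} (hC : 0 ≤ C) (hf : ∀ x, ‖f x‖ ≤ C) :
    ‖⨍ x, f x ∂μ‖ ≤ C := by
  rw [average_eq, norm_smul, norm_inv, Real.norm_eq_abs, abs_of_nonneg measureReal_nonneg]
  rcases eq_or_ne (μ univ) ⊤ with hμ | hμ
  · simp [measureReal_def, hμ, hC]
  have : IsFiniteMeasure μ := ⟨lt_top_iff_ne_top.2 hμ⟩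
  rcases eq_or_ne (μ.real univ) 0 with h0 | h0
  · simp [h0, hC]
  calc (μ.real univ)⁻¹ * ‖∫ x, f x ∂μ‖ ≤ (μ.real univ)⁻¹ * (C * μ.real univ) := by
        gcongr; exact norm_integral_le_of_norm_le_const (ae_of_all _ hf)
    _ = C := by field_simp

end Average

section ContinuousMap

variable {X Y : Type*} [TopologicalSpace X] [CompactSpace X] [TopologicalSpace Y]
  [MeasurableSpace Y] [OpensMeasurableSpace Y] (ν : Measure Y) [IsFiniteMeasure ν] {g : Y → X}

theorem ContinuousMap.integrable_comp (f : C(X, ℂ)) (hg : Continuous g) :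
    Integrable (fun y => f (g y)) ν :=
  .of_bound (f.continuous.comp hg).aestronglyMeasurable ‖f‖
    (ae_of_all _ fun _ => f.norm_coe_le_norm _)

theorem ContinuousMap.lipschitzWith_average_comp (hg : Continuous g) :
    LipschitzWith 1 fun f : C(X, ℂ) => ⨍ y, f (g y) ∂ν := by
  refine LipschitzWith.of_dist_le_mul fun f₁ f₂ => ?_
  rw [NNReal.coe_one, one_mul, dist_eq_norm, dist_eq_norm,
    ← average_sub (f₁.integrable_comp ν hg) (f₂.integrable_comp ν hg)]
  exact norm_average_le (norm_nonneg _) fun y => (f₁ - f₂).norm_coe_le_norm (g y)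

end ContinuousMap

theorem Flow.measurePreserving_of_forall_measure_image {τ X : Type*} [TopologicalSpace τ]
    [AddGroup τ] [TopologicalSpace X] [MeasurableSpace X] [BorelSpace X] {μ : Measure X}
    (ϕ : Flow τ X) (h : ∀ t A, MeasurableSet A → μ (ϕ t '' A) = μ A) (t : τ) :
    MeasurePreserving (ϕ t) μ μ := by
  refine ⟨(ϕ.continuous_toFun t).measurable, Measure.ext fun A hA => ?_⟩
  rw [Measure.map_apply (ϕ.continuous_toFun t).measurable hA, ← neg_neg t,
    ← ϕ.image_eq_preimage_symm, h _ A hA]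

noncomputable section TimeAverage

variable {X E : Type*} [TopologicalSpace X] [NormedAddCommGroup E]

theorem integrable_comp_uncurry_flow [MeasurableSpace X] [BorelSpace X] {μ : Measure X}
    [IsFiniteMeasure μ] (ϕ : Flow ℝ X) {f : X → E} (hf : StronglyMeasurable f) {C : ℝ}
    (hC : ∀ x, ‖f x‖ ≤ C) (ν : Measure ℝ) [IsFiniteMeasure ν] :
    Integrable (fun q : X × ℝ => f (ϕ q.2 q.1)) (μ.prod ν) :=
  .of_bound (hf.comp_measurable
      (ϕ.continuous continuous_snd continuous_fst).measurable).aestronglyMeasurable C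
    (ae_of_all _ fun _ => hC _)

variable [NormedSpace ℝ E]

def timeAverage (ϕ : Flow ℝ X) (f : X → E) (t : ℝ) (x : X) : E :=
  ⨍ s in Ioc 0 t, f (ϕ s x)

theorem norm_timeAverage_le (ϕ : Flow ℝ X) {f : X → E} {C : ℝ} (hf : ∀ x, ‖f x‖ ≤ C) (t : ℝ)
    (x : X) : ‖timeAverage ϕ f t x‖ ≤ C :=
  norm_average_le ((norm_nonneg _).trans (hf x)) fun _ => hf _

variable [MeasurableSpace X] [BorelSpace X] {μ : Measure X} [IsFiniteMeasure μ]
  {ϕ : Flow ℝ X} {f : X → E} {C : ℝ}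

theorem integrable_timeAverage (ϕ : Flow ℝ X) (hf : StronglyMeasurable f) (hC : ∀ x, ‖f x‖ ≤ C)
    (t : ℝ) : Integrable (fun x => timeAverage ϕ f t x) μ := by
  simp only [timeAverage, average_eq]
  exact ((integrable_comp_uncurry_flow ϕ hf hC _).integral_prod_left).smul _

variable [CompleteSpace E]

theorem integral_timeAverage (hϕ : ∀ s, MeasurePreserving (ϕ s) μ μ) (hf : StronglyMeasurable f)
    (hC : ∀ x, ‖f x‖ ≤ C) {t : ℝ} (ht : 0 < t) :
    ∫ x, timeAverage ϕ f t x ∂μ = ∫ x, f x ∂μ := by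
  have hpos : volume (Ioc 0 t) ≠ 0 := by simp [ht]
  simp only [timeAverage, average_eq, integral_smul]
  rw [integral_integral_swap (integrable_comp_uncurry_flow ϕ hf hC _)]
  simp only [(hϕ _).integral_comp (ϕ.toHomeomorph _).measurableEmbedding]
  rw [← average_eq, setAverage_const hpos measure_Ioc_lt_top.ne]

theorem integral_eq_of_ae_tendsto_timeAverage (hϕ : ∀ s, MeasurePreserving (ϕ s) μ μ)
    (hf : StronglyMeasurable f) (hC : ∀ x, ‖f x‖ ≤ C) {g : X → E}
    (hg : ∀ᵐ x ∂μ, Tendsto (fun n : ℕ => timeAverage ϕ f n x) atTop (𝓝 (g x))) :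
    ∫ x, f x ∂μ = ∫ x, g x ∂μ := by
  refine tendsto_nhds_unique ?_ (tendsto_integral_of_dominated_convergence (fun _ => C)
    (fun n => (integrable_timeAverage ϕ hf hC n).aestronglyMeasurable) (integrable_const C)
    (fun n => ae_of_all _ (norm_timeAverage_le ϕ hC n)) hg)
  refine tendsto_const_nhds.congr' ?_
  filter_upwards [eventually_gt_atTop 0] with n hn
  exact (integral_timeAverage hϕ hf hC (Nat.cast_pos.2 hn)).symm

end TimeAverage

section ConvergentTimeAverages

variable {X : Type*} [TopologicalSpace X] [CompactSpace X] [MeasurableSpace X]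
  [OpensMeasurableSpace X]

def convergentTimeAverages (ϕ : Flow ℝ X) (μ : Measure X) [IsFiniteMeasure μ] (x : X) :
    Submodule ℂ C(X, ℂ) where
  carrier := {f | Tendsto (fun t => timeAverage ϕ f t x) atTop (𝓝 (⨍ y, f y ∂μ))}
  zero_mem' := by simp [timeAverage]
  add_mem' {f g} hf hg := by
    have hϕx : Continuous (ϕ · x) := ϕ.continuous continuous_id continuous_const
    have hμ (h : C(X, ℂ)) : Integrable (fun y => h y) μ := h.integrable_comp μ continuous_id
    simp only [mem_ofPred_eq, timeAverage, ContinuousMap.add_apply] at hf hg ⊢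
    simp only [average_add (f.integrable_comp _ hϕx) (g.integrable_comp _ hϕx),
      average_add (hμ f) (hμ g)]
    exact hf.add hg
  smul_mem' c f hf := by
    simp only [mem_ofPred_eq, timeAverage, ContinuousMap.smul_apply, smul_eq_mul,
      average_const_mul] at hf ⊢
    exact hf.const_mul c

theorem mem_convergentTimeAverages {ϕ : Flow ℝ X} {μ : Measure X} [IsFiniteMeasure μ] {x : X}
    {f : C(X, ℂ)} : f ∈ convergentTimeAverages ϕ μ x ↔
      Tendsto (fun t => timeAverage ϕ f t x) atTop (𝓝 (⨍ y, f y ∂μ)) :=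
  Iff.rfl

theorem isClosed_convergentTimeAverages (ϕ : Flow ℝ X) (μ : Measure X) [IsFiniteMeasure μ]
    (x : X) : IsClosed (convergentTimeAverages ϕ μ x : Set C(X, ℂ)) :=
  (LipschitzWith.uniformEquicontinuous _ 1 fun _ => ContinuousMap.lipschitzWith_average_comp _
    (ϕ.continuous continuous_id continuous_const)).equicontinuous.isClosed_setOfPred_tendsto
    (ContinuousMap.lipschitzWith_average_comp μ continuous_id).continuous

end ConvergentTimeAverages

theorem tendsto_setAverage_exp_mul_I {ω : ℝ} (hω : ω ≠ 0) :
    Tendsto (fun t => ⨍ s in Ioc 0 t, Complex.exp (↑(ω * s) * Complex.I)) atTop (𝓝 0) := by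
  set c : ℂ := ω * Complex.I
  have hc : c ≠ 0 := mul_ne_zero (by exact_mod_cast hω) Complex.I_ne_zero
  have hbound :
      ∀ t > 0, ‖⨍ s in Ioc 0 t, Complex.exp (↑(ω * s) * Complex.I)‖ ≤ 2 / ‖c‖ * t⁻¹ := by
    intro t ht
    have hexp (s : ℝ) : Complex.exp (↑(ω * s) * Complex.I) = Complex.exp (c * s) := by
      rw [Complex.ofReal_mul, mul_right_comm]
    have hnorm (s : ℝ) : ‖Complex.exp (c * s)‖ = 1 := by
      rw [← hexp, Complex.norm_exp_ofReal_mul_I]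
    simp_rw [setAverage_eq, Real.volume_real_Ioc_of_le ht.le, sub_zero,
      ← intervalIntegral.integral_of_le ht.le, hexp, integral_exp_mul_complex hc, norm_smul,
      norm_div, Complex.ofReal_zero, mul_zero, Complex.exp_zero, norm_inv,
      Real.norm_of_nonneg ht.le]
    have : ‖Complex.exp (c * t) - 1‖ ≤ 2 := (norm_sub_le _ _).trans (by norm_num [hnorm])
    calc t⁻¹ * (‖Complex.exp (c * t) - 1‖ / ‖c‖) ≤ t⁻¹ * (2 / ‖c‖) := by gcongr
      _ = _ := mul_comm _ _
  exact squeeze_zero_norm' (eventually_gt_atTop 0 |>.mono hbound)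
    (by simpa using tendsto_inv_atTop_zero.const_mul (2 / ‖c‖))

noncomputable section Torus

variable {T : ℝ} {ι : Type*}

def linearFlow (ξ : ι → ℝ) : Flow ℝ (ι → AddCircle T) where
  toFun s x := x + fun i => ((s * ξ i : ℝ) : AddCircle T)
  cont' := by fun_prop
  map_add' s₁ s₂ x := by
    ext i
    simp only [Pi.add_apply, add_mul, AddCircle.coe_add]
    abel
  map_zero' x := by ext i; simp

theorem linearFlow_apply (ξ : ι → ℝ) (s : ℝ) (x : ι → AddCircle T) :
    linearFlow ξ s x = x + fun i => ((s * ξ i : ℝ) : AddCircle T) := rfl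

def geodesicFlow : Flow ℝ ((ι → AddCircle T) × (ι → ℝ)) where
  toFun s p := (linearFlow p.2 s p.1, p.2)
  cont' := by
    simp only [linearFlow_apply]
    fun_prop
  map_add' s₁ s₂ p := by simp [(linearFlow p.2).map_add]
  map_zero' p := by simp [(linearFlow p.2).map_zero]

variable [Fintype ι]

def Nonresonant (ξ : ι → ℝ) : Prop := ∀ k : ι → ℤ, k ≠ 0 → ∑ i, (k i : ℝ) * ξ i ≠ 0

def torusChar (k : ι → ℤ) : C(ι → AddCircle T, ℂ) where
  toFun x := ∏ i, fourier (k i) (x i)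

theorem torusChar_apply (k : ι → ℤ) (x : ι → AddCircle T) :
    torusChar k x = ∏ i, fourier (k i) (x i) := rfl

theorem torusChar_zero : torusChar (0 : ι → ℤ) = (1 : C(ι → AddCircle T, ℂ)) := by
  ext x; simp [torusChar_apply]

theorem torusChar_add (k l : ι → ℤ) :
    torusChar (k + l) = (torusChar k * torusChar l : C(ι → AddCircle T, ℂ)) := by
  ext x; simp [torusChar_apply, Finset.prod_mul_distrib]

theorem star_torusChar (k : ι → ℤ) :
    star (torusChar k) = (torusChar (-k) : C(ι → AddCircle T, ℂ)) := by
  ext x; simp [torusChar_apply]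

theorem torusChar_single [DecidableEq ι] (i : ι) (x : ι → AddCircle T) :
    torusChar (Pi.single i 1) x = AddCircle.toCircle (x i) := by
  rw [torusChar_apply, Finset.prod_eq_single i (fun j _ hj => by simp [hj])
    (by simp), Pi.single_eq_same, fourier_one]

theorem torusChar_add_apply (k : ι → ℤ) (x y : ι → AddCircle T) :
    torusChar k (x + y) = torusChar k x * torusChar k y := by
  simp [torusChar_apply, fourier_apply, smul_add, AddCircle.toCircle_add,
    Finset.prod_mul_distrib]

theorem torusChar_coe (k : ι → ℤ) (r : ι → ℝ) :
    torusChar k (fun i => (r i : AddCircle T)) =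
      Complex.exp (↑(2 * Real.pi / T * ∑ i, k i * r i) * Complex.I) := by
  simp only [torusChar_apply, fourier_coe_apply, ← Complex.exp_sum]
  congr 1
  push_cast
  rw [Finset.mul_sum, Finset.sum_mul]
  exact Finset.sum_congr rfl fun i _ => by ring

theorem torusChar_linearFlow (k : ι → ℤ) (ξ : ι → ℝ) (s : ℝ) (x : ι → AddCircle T) :
    torusChar k (linearFlow ξ s x) =
      torusChar k x * Complex.exp (↑(2 * Real.pi / T * (∑ i, k i * ξ i) * s) * Complex.I) := by
  rw [linearFlow_apply, torusChar_add_apply, torusChar_coe]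
  simp only [mul_left_comm _ s, ← Finset.mul_sum]
  ring_nf

variable [hT : Fact (0 < T)]

theorem span_torusChar_closure_eq_top :
    (span ℂ (range (torusChar (T := T) (ι := ι)))).topologicalClosure = ⊤ := by
  classical
  set A := StarAlgebra.adjoin ℂ (range (torusChar (T := T) (ι := ι)))
  have hstar : star (range (torusChar (T := T) (ι := ι))) = range torusChar := by
    ext f
    simp only [mem_star, mem_range]
    exact ⟨fun ⟨k, hk⟩ => ⟨-k, by rw [← star_torusChar, hk, star_star]⟩,
      fun ⟨k, hk⟩ => ⟨-k, by rw [← star_torusChar, hk]⟩⟩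
  have hspan : A.toSubalgebra.toSubmodule = span ℂ (range torusChar) := by
    rw [StarAlgebra.adjoin_toSubalgebra, hstar, union_self]
    refine Algebra.adjoin_eq_span_of_subset _ (.trans (fun f hf => ?_) subset_span)
    induction hf using Submonoid.closure_induction with
    | mem f hf => exact hf
    | one => exact ⟨0, torusChar_zero⟩
    | mul f g _ _ hf hg =>
      obtain ⟨k, rfl⟩ := hf
      obtain ⟨l, rfl⟩ := hg
      exact ⟨k + l, torusChar_add k l⟩
  have hsep : A.SeparatesPoints := by
    intro x y hxy
    obtain ⟨i, hi⟩ := Function.ne_iff.mp hxy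
    refine ⟨_, ⟨torusChar (Pi.single i 1), StarAlgebra.subset_adjoin ℂ _ ⟨_, rfl⟩, rfl⟩, ?_⟩
    simp only [torusChar_single, ne_eq]
    exact fun h => hi (AddCircle.injective_toCircle hT.out.ne' (Subtype.ext h))
  rw [← hspan]
  exact congr_arg (fun B : StarSubalgebra ℂ _ => B.toSubalgebra.toSubmodule)
    (ContinuousMap.starSubalgebra_topologicalClosure_eq_top_of_separatesPoints A hsep)

theorem integral_torusChar {k : ι → ℤ} (hk : k ≠ 0) : ∫ x, torusChar (T := T) k x = 0 := by
  obtain ⟨i, hi⟩ : ∃ i, k i ≠ 0 := Function.ne_iff.mp hk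
  have hcoeff := congr_fun (fourierCoeff_fourier (T := T) (k i)) 0
  rw [fourierCoeff, Pi.single_eq_of_ne (Ne.symm hi)] at hcoeff
  simp only [neg_zero, fourier_zero, one_smul] at hcoeff
  simp only [torusChar_apply]
  rw [show (volume : Measure (ι → AddCircle T)) = Measure.pi fun _ => volume from rfl,
    integral_fintype_prod_eq_prod]
  refine Finset.prod_eq_zero (Finset.mem_univ i) ?_
  rw [AddCircle.volume_eq_smul_haarAddCircle, integral_smul_measure, hcoeff, smul_zero]

theorem volume_real_univ_torus :
    (volume : Measure (ι → AddCircle T)).real univ = T ^ Fintype.card ι := by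
  rw [measureReal_def, show (volume : Measure (ι → AddCircle T)) = Measure.pi fun _ => volume
    from rfl, Measure.pi_univ]
  simp [AddCircle.measure_univ, ENNReal.toReal_ofReal hT.out.le]

theorem torusChar_mem_convergentTimeAverages {ξ : ι → ℝ} (hξ : Nonresonant ξ) (k : ι → ℤ)
    (x : ι → AddCircle T) : torusChar k ∈ convergentTimeAverages (linearFlow ξ) volume x := by
  rw [mem_convergentTimeAverages]
  by_cases hk : k = 0
  · subst hk
    simp only [torusChar_zero, ContinuousMap.one_apply, average_const]
    refine tendsto_const_nhds.congr' ?_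
    filter_upwards [eventually_gt_atTop 0] with t ht
    exact (setAverage_const (by simp [ht]) measure_Ioc_lt_top.ne 1).symm
  · have hω : 2 * Real.pi / T * ∑ i, (k i : ℝ) * ξ i ≠ 0 :=
      mul_ne_zero (div_ne_zero (by positivity) hT.out.ne') (hξ k hk)
    simp only [timeAverage, torusChar_linearFlow, average_const_mul]
    rw [average_eq, integral_torusChar hk, smul_zero]
    simpa only [mul_zero] using (tendsto_setAverage_exp_mul_I hω).const_mul (torusChar k x)

theorem convergentTimeAverages_linearFlow_eq_top {ξ : ι → ℝ} (hξ : Nonresonant ξ)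
    (x : ι → AddCircle T) : convergentTimeAverages (linearFlow ξ) volume x = ⊤ := by
  refine eq_top_iff.2 (span_torusChar_closure_eq_top.symm.trans_le ?_)
  exact topologicalClosure_minimal _ (span_le.2 (range_subset_iff.2
    (torusChar_mem_convergentTimeAverages hξ · x))) (isClosed_convergentTimeAverages _ _ x)

theorem tendsto_timeAverage_linearFlow {ξ : ι → ℝ} (hξ : Nonresonant ξ)
    {f : (ι → AddCircle T) → ℝ} (hf : Continuous f) (x : ι → AddCircle T) :
    Tendsto (fun t => timeAverage (linearFlow ξ) f t x) atTop (𝓝 (⨍ y, f y)) := by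
  have h : (⟨fun y => (f y : ℂ), by fun_prop⟩ : C(ι → AddCircle T, ℂ)) ∈
      convergentTimeAverages (linearFlow ξ) volume x := by
    rw [convergentTimeAverages_linearFlow_eq_top hξ]; trivial
  simp only [mem_convergentTimeAverages, timeAverage, ContinuousMap.coe_mk, average_ofReal] at h
  exact Complex.isometry_ofReal.isEmbedding.tendsto_nhds_iff.2 h

end Torus

/-- On the flat torus: if a finite invariant measure gives no mass to the resonant
set T^d × Ω, then integrals of a ∈ C_c equal integrals of its spatial average ā(ξ). -/
theorem stmt1 (d : ℕ)
    (μ : Measure ((Fin d → AddCircle (2 * Real.pi)) × (Fin d → ℝ)))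
    [IsFiniteMeasure μ]
    (hinv : ∀ s : ℝ, ∀ A : Set ((Fin d → AddCircle (2 * Real.pi)) × (Fin d → ℝ)),
      MeasurableSet A →
      μ ((fun p : (Fin d → AddCircle (2 * Real.pi)) × (Fin d → ℝ) =>
        (p.1 + fun i => ((s * p.2 i : ℝ) : AddCircle (2 * Real.pi)), p.2)) '' A) = μ A)
    (a : (Fin d → AddCircle (2 * Real.pi)) × (Fin d → ℝ) → ℝ)
    (ha : Continuous a) (hca : HasCompactSupport a)
    (hres : μ {p : (Fin d → AddCircle (2 * Real.pi)) × (Fin d → ℝ) |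
      ∃ k : Fin d → ℤ, k ≠ 0 ∧ ∑ i, (k i : ℝ) * p.2 i = 0} = 0) :
    ∫ p, a p ∂μ = ∫ p, (((2 * Real.pi) ^ d)⁻¹ * ∫ y, a (y, p.2)) ∂μ := by
  obtain ⟨C, hC⟩ := ha.bounded_above_of_compact_support hca
  have hnonres : ∀ᵐ p ∂μ, Nonresonant p.2 :=
    ae_iff.2 (measure_mono_null (fun p hp => by simpa [Nonresonant] using hp) hres)
  refine integral_eq_of_ae_tendsto_timeAverage (ϕ := geodesicFlow)
    (geodesicFlow.measurePreserving_of_forall_measure_image hinv) ha.stronglyMeasurable hC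
    (hnonres.mono fun p hp => ?_)
  have h := (tendsto_timeAverage_linearFlow hp (f := fun y => a (y, p.2)) (by fun_prop) p.1).comp
    tendsto_natCast_atTop_atTop
  rw [average_eq, volume_real_univ_torus, Fintype.card_fin, smul_eq_mul] at h
  exact h
end
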